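/- Let G be a simple mixed graph on n vertices with e edges and a arcs, and let 𝓘(G) be its integrated adjacency matrix with eigenvalues in nonincreasing order. Then λ_{2n−1}(𝓘(G)) ≤ (2e+a)/n ≤ λ₁(𝓘(G)) and λ_{2n}(𝓘(G)) ≤ (2e−a)/n ≤ λ₂(𝓘(G)). -/

import Mathlib

/-!
The vectors constant on each of the two halves of the index set form a plane on which the
quadratic form of `𝓘(G)` is explicit: at `(p,…,p, q,…,q)` it is `2e(p² + q²) + 2apq`, against a
squared norm `n(p² + q²)`. So on this plane the Rayleigh quotient lies between `(2e−a)/n` and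
`(2e+a)/n`, the two values being attained at `(1,−1)` and `(1,1)`. Quotient-matrix interlacing
then becomes the min-max principle: a subspace of dimension `d` on which the Rayleigh quotient is
`≥ r` carries `d` eigenvalues `≥ r`, because the coefficients of its vectors along the
eigenvectors of eigenvalue `≥ r` already determine them.
-/

open Matrix Polynomial Module Finset
open scoped RealInnerProductSpace

section Rayleigh

variable {E ι : Type*} [NormedAddCommGroup E] [InnerProductSpace ℝ E] [Fintype ι]
  {T : E →ₗ[ℝ] E} {b : OrthonormalBasis ι ℝ E} {ev : ι → ℝ}

theorem LinearMap.IsSymmetric.inner_map_self_eq_sum (hT : T.IsSymmetric)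
    (hb : ∀ i, T (b i) = ev i • b i) (v : E) :
    ⟪v, T v⟫ = ∑ i, ev i * ⟪b i, v⟫ ^ 2 := by
  rw [← b.sum_inner_mul_inner]
  refine sum_congr rfl fun i _ => ?_
  rw [← hT, hb, real_inner_smul_left, real_inner_comm v]
  ring

theorem OrthonormalBasis.real_inner_self_eq_sum (v : E) : ⟪v, v⟫ = ∑ i, ⟪b i, v⟫ ^ 2 := by
  rw [← b.sum_inner_mul_inner]
  simp_rw [real_inner_comm v, sq]

theorem LinearMap.IsSymmetric.finrank_le_card_le_of_forall_le_inner [FiniteDimensional ℝ E]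
    (hT : T.IsSymmetric) (hb : ∀ i, T (b i) = ev i • b i) {r : ℝ} {W : Submodule ℝ E}
    (hW : ∀ v ∈ W, r * ⟪v, v⟫ ≤ ⟪v, T v⟫) :
    finrank ℝ W ≤ #{i | r ≤ ev i} := by
  let coeffs : W →ₗ[ℝ] {i // r ≤ ev i} → ℝ :=
    LinearMap.pi (fun i => innerₛₗ ℝ (b i)) ∘ₗ W.subtype
  suffices Function.Injective coeffs by
    simpa [Fintype.card_subtype] using LinearMap.finrank_le_finrank_of_injective this
  rw [← LinearMap.ker_eq_bot, Submodule.eq_bot_iff]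
  rintro ⟨v, hv⟩ hker
  have hhigh : ∀ i, r ≤ ev i → ⟪b i, v⟫ = 0 := fun i hi =>
    congrFun (LinearMap.mem_ker.mp hker) ⟨i, hi⟩
  have hgap : ∑ i, (r - ev i) * ⟪b i, v⟫ ^ 2 ≤ 0 := by
    have := hW v hv
    rw [hT.inner_map_self_eq_sum hb, b.real_inner_self_eq_sum, mul_sum] at this
    simpa [sub_mul] using this
  have hterm : ∀ i, 0 ≤ (r - ev i) * ⟪b i, v⟫ ^ 2 := fun i => by
    rcases le_or_gt r (ev i) with hi | hi
    · simp [hhigh i hi]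
    · exact mul_nonneg (by linarith) (sq_nonneg _)
  have hlow : ∀ i, ⟪b i, v⟫ = 0 := fun i => by
    rcases le_or_gt r (ev i) with hi | hi
    · exact hhigh i hi
    · have := (sum_eq_zero_iff_of_nonneg fun i _ => hterm i).mp
        (le_antisymm hgap (sum_nonneg fun i _ => hterm i)) i (mem_univ i)
      simpa [(sub_pos.mpr hi).ne'] using this
  have : ⟪v, v⟫ = 0 := by rw [b.real_inner_self_eq_sum]; simp [hlow]
  simpa using inner_self_eq_zero.mp this

theorem LinearMap.IsSymmetric.finrank_le_card_le_of_forall_inner_le [FiniteDimensional ℝ E]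
    (hT : T.IsSymmetric) (hb : ∀ i, T (b i) = ev i • b i) {r : ℝ} {W : Submodule ℝ E}
    (hW : ∀ v ∈ W, ⟪v, T v⟫ ≤ r * ⟪v, v⟫) :
    finrank ℝ W ≤ #{i | ev i ≤ r} := by
  have hnegT : (-T).IsSymmetric := fun x y => by simp [hT x y]
  have hnegb : ∀ i, (-T) (b i) = (-ev i) • b i := fun i => by simp [hb]
  simpa using hnegT.finrank_le_card_le_of_forall_le_inner hnegb (r := -r)
    fun v hv => by simpa [inner_neg_right] using hW v hv

variable [FiniteDimensional ℝ E] {n : ℕ} (hT : T.IsSymmetric) (hn : finrank ℝ E = n)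

theorem LinearMap.IsSymmetric.le_eigenvalues_of_forall_le_inner {r : ℝ} {W : Submodule ℝ E}
    (hW : ∀ v ∈ W, r * ⟪v, v⟫ ≤ ⟪v, T v⟫) (k : Fin n) (hk : (k : ℕ) < finrank ℝ W) :
    r ≤ hT.eigenvalues hn k := by
  by_contra! hlt
  have hsub : ({i | r ≤ hT.eigenvalues hn i} : Finset (Fin n)) ⊆ Iio k := fun i hi => by
    by_contra! hki
    simp only [mem_filter, mem_univ, true_and, mem_Iio, not_lt] at hi hki
    exact absurd (hi.trans (hT.eigenvalues_antitone hn hki)) hlt.not_ge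
  have := (hT.finrank_le_card_le_of_forall_le_inner (hT.apply_eigenvectorBasis hn) hW).trans
    (card_le_card hsub)
  simp only [Fin.card_Iio] at this
  omega

theorem LinearMap.IsSymmetric.eigenvalues_le_of_forall_inner_le {r : ℝ} {W : Submodule ℝ E}
    (hW : ∀ v ∈ W, ⟪v, T v⟫ ≤ r * ⟪v, v⟫) (k : Fin n) (hk : n ≤ k + finrank ℝ W) :
    hT.eigenvalues hn k ≤ r := by
  by_contra! hlt
  have hsub : ({i | hT.eigenvalues hn i ≤ r} : Finset (Fin n)) ⊆ Ioi k := fun i hi => by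
    by_contra! hki
    simp only [mem_filter, mem_univ, true_and, mem_Ioi, not_lt] at hi hki
    exact absurd (hi.trans_lt hlt) (hT.eigenvalues_antitone hn hki).not_gt
  have := (hT.finrank_le_card_le_of_forall_inner_le (hT.apply_eigenvectorBasis hn) hW).trans
    (card_le_card hsub)
  simp only [Fin.card_Ioi] at this
  omega

theorem LinearMap.IsSymmetric.le_eigenvalues_of_le_inner {r : ℝ} {v : E} (hv : v ≠ 0)
    (h : r * ⟪v, v⟫ ≤ ⟪v, T v⟫) (k : Fin n) (hk : (k : ℕ) = 0) : r ≤ hT.eigenvalues hn k := by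
  refine hT.le_eigenvalues_of_forall_le_inner hn (W := ℝ ∙ v) ?_ k
    (by simp [finrank_span_singleton hv, hk])
  intro w hw
  obtain ⟨t, rfl⟩ := Submodule.mem_span_singleton.mp hw
  simp only [map_smul, real_inner_smul_left, real_inner_smul_right]
  nlinarith [mul_le_mul_of_nonneg_left h (mul_self_nonneg t)]

theorem LinearMap.IsSymmetric.eigenvalues_le_of_inner_le {r : ℝ} {v : E} (hv : v ≠ 0)
    (h : ⟪v, T v⟫ ≤ r * ⟪v, v⟫) (k : Fin n) (hk : (k : ℕ) + 1 = n) :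
    hT.eigenvalues hn k ≤ r := by
  refine hT.eigenvalues_le_of_forall_inner_le hn (W := ℝ ∙ v) ?_ k
    (by simp [finrank_span_singleton hv, hk])
  intro w hw
  obtain ⟨t, rfl⟩ := Submodule.mem_span_singleton.mp hw
  simp only [map_smul, real_inner_smul_left, real_inner_smul_right]
  nlinarith [mul_le_mul_of_nonneg_left h (mul_self_nonneg t)]

end Rayleigh

theorem Matrix.IsHermitian.ofFn_eigenvalues₀_eq {ι : Type*} [Fintype ι] [DecidableEq ι]
    {M : Matrix ι ι ℝ} (hM : M.IsHermitian) {m : ℕ} {μ : Fin m → ℝ} (hμa : Antitone μ)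
    (hμ : M.charpoly = ∏ i, (X - C (μ i))) :
    List.ofFn μ = List.ofFn hM.eigenvalues₀ := by
  have hroots : M.charpoly.roots = Multiset.map μ univ.val := by
    rw [hμ, roots_prod _ _ (prod_ne_zero_iff.mpr fun i _ => X_sub_C_ne_zero _)]
    simp
  rw [← hM.sort_roots_charpoly_eq_eigenvalues₀, hroots, Fin.univ_val_map]
  simp only [Multiset.map_coe, RCLike.re_to_real, List.map_id', Multiset.coe_sort]
  refine (List.mergeSort_of_pairwise ?_).symm
  simp_rw [decide_eq_true_eq, ← List.sortedGE_iff_pairwise]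
  exact hμa.sortedGE_ofFn

theorem Matrix.IsHermitian.eq_eigenvalues₀_of_charpoly_eq_prod {ι : Type*} [Fintype ι]
    [DecidableEq ι] {M : Matrix ι ι ℝ} (hM : M.IsHermitian) {m : ℕ} {μ : Fin m → ℝ}
    (hμa : Antitone μ) (hμ : M.charpoly = ∏ i, (X - C (μ i))) (k : ℕ) (hk : k < m)
    (hk' : k < Fintype.card ι) : μ ⟨k, hk⟩ = hM.eigenvalues₀ ⟨k, hk'⟩ := by
  have h := congrArg (·[k]?) (hM.ofFn_eigenvalues₀_eq hμa hμ)
  simpa [hk, hk'] using h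

def blockConst (ι : Type*) : ℝ × ℝ →ₗ[ℝ] EuclideanSpace ℝ (ι ⊕ ι) where
  toFun pq := WithLp.toLp 2 (Sum.elim (fun _ => pq.1) (fun _ => pq.2))
  map_add' x y := by ext (i | i) <;> rfl
  map_smul' t x := by ext (i | i) <;> rfl

theorem blockConst_injective (ι : Type*) [Nonempty ι] : Function.Injective (blockConst ι) := by
  intro x y h
  obtain ⟨i⟩ := ‹Nonempty ι›
  exact Prod.ext (congrArg (· (Sum.inl i)) h) (congrArg (· (Sum.inr i)) h)

variable {ι : Type*} [Fintype ι]

theorem Matrix.mulVec_const_dotProduct_const {m : Type*} [Fintype m] (A : Matrix m ι ℝ)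
    (p q : ℝ) : (A *ᵥ fun _ => q) ⬝ᵥ (fun _ => p) = p * q * ∑ i, ∑ j, A i j := by
  simp only [dotProduct, mulVec, mul_sum, sum_mul]
  exact sum_congr rfl fun i _ => sum_congr rfl fun j _ => by ring

theorem real_inner_blockConst_self (pq : ℝ × ℝ) :
    ⟪blockConst ι pq, blockConst ι pq⟫ = Fintype.card ι * (pq.1 ^ 2 + pq.2 ^ 2) := by
  rw [EuclideanSpace.inner_eq_star_dotProduct]
  simp only [dotProduct, blockConst, LinearMap.coe_mk, AddHom.coe_mk, Pi.star_apply, star_trivial,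
    Fintype.sum_sum_type, Sum.elim_inl, Sum.elim_inr, sum_const, card_univ, nsmul_eq_mul]
  ring

theorem real_inner_blockConst_toEuclideanLin_fromBlocks [DecidableEq ι] (A B : Matrix ι ι ℝ)
    (pq : ℝ × ℝ) :
    ⟪blockConst ι pq, toEuclideanLin (fromBlocks A B Bᵀ A) (blockConst ι pq)⟫ =
      (∑ i, ∑ j, A i j) * (pq.1 ^ 2 + pq.2 ^ 2) + 2 * (∑ i, ∑ j, B i j) * pq.1 * pq.2 := by
  have hBt : ∑ i, ∑ j, B j i = ∑ i, ∑ j, B i j := sum_comm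
  rw [EuclideanSpace.inner_eq_star_dotProduct]
  simp only [blockConst, LinearMap.coe_mk, AddHom.coe_mk, toLpLin_toLp, toLin'_apply,
    fromBlocks_mulVec, Sum.elim_comp_inl, Sum.elim_comp_inr, star_trivial,
    sumElim_dotProduct_sumElim, add_dotProduct, mulVec_const_dotProduct_const, transpose_apply, hBt]
  ring

variable [Nonempty ι] [DecidableEq ι] (A B : Matrix ι ι ℝ) (pq : ℝ × ℝ)

theorem real_inner_blockConst_toEuclideanLin_fromBlocks_eq_sub :
    ⟪blockConst ι pq, toEuclideanLin (fromBlocks A B Bᵀ A) (blockConst ι pq)⟫ =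
      ((∑ i, ∑ j, A i j) + ∑ i, ∑ j, B i j) / Fintype.card ι *
          ⟪blockConst ι pq, blockConst ι pq⟫
        - (∑ i, ∑ j, B i j) * (pq.1 - pq.2) ^ 2 := by
  have : (Fintype.card ι : ℝ) ≠ 0 := Nat.cast_ne_zero.mpr Fintype.card_ne_zero
  rw [real_inner_blockConst_toEuclideanLin_fromBlocks, real_inner_blockConst_self]
  field_simp
  ring

theorem real_inner_blockConst_toEuclideanLin_fromBlocks_eq_add :
    ⟪blockConst ι pq, toEuclideanLin (fromBlocks A B Bᵀ A) (blockConst ι pq)⟫ =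
      ((∑ i, ∑ j, A i j) - ∑ i, ∑ j, B i j) / Fintype.card ι *
          ⟪blockConst ι pq, blockConst ι pq⟫
        + (∑ i, ∑ j, B i j) * (pq.1 + pq.2) ^ 2 := by
  have : (Fintype.card ι : ℝ) ≠ 0 := Nat.cast_ne_zero.mpr Fintype.card_ne_zero
  rw [real_inner_blockConst_toEuclideanLin_fromBlocks, real_inner_blockConst_self]
  field_simp
  ring

/-- For a simple mixed graph `G` on `n ≥ 1` vertices with `e` edges and `a` arcs, the
eigenvalues of `𝓘(G) = [[A, B], [Bᵀ, A]]` in nonincreasing order satisfy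
`λ_{2n−1} ≤ (2e+a)/n ≤ λ₁` and `λ_{2n} ≤ (2e−a)/n ≤ λ₂`. -/
theorem stmt16 {n : ℕ} (hn : 0 < n) (A B : Matrix (Fin n) (Fin n) ℝ) (e a : ℕ)
    (hA : A.IsSymm)
    (he : ∑ i, ∑ j, A i j = 2 * (e : ℝ))
    (ha : ∑ i, ∑ j, B i j = (a : ℝ))
    (μ : Fin (2 * n) → ℝ) (hμa : Antitone μ)
    (hμ : (Matrix.fromBlocks A B Bᵀ A).charpoly = ∏ i, (X - C (μ i))) :
    (μ ⟨2 * n - 2, by omega⟩ ≤ (2 * (e : ℝ) + a) / n ∧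
      (2 * (e : ℝ) + a) / n ≤ μ ⟨0, by omega⟩) ∧
    (μ ⟨2 * n - 1, by omega⟩ ≤ (2 * (e : ℝ) - a) / n ∧
      (2 * (e : ℝ) - a) / n ≤ μ ⟨1, by omega⟩) := by
  have : Nonempty (Fin n) := ⟨⟨0, hn⟩⟩
  have hAh : A.IsHermitian := isHermitian_iff_isSymm.mpr hA
  have hM : (fromBlocks A B Bᵀ A).IsHermitian :=
    hAh.fromBlocks (conjTranspose_eq_transpose_of_trivial B) hAh
  have hT := isSymmetric_toEuclideanLin_iff.mpr hM
  have hμ_eq (k : ℕ) (hk : k < 2 * n) :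
      μ ⟨k, hk⟩ = hT.eigenvalues finrank_euclideanSpace ⟨k, by simp; omega⟩ :=
    hM.eq_eigenvalues₀_of_charpoly_eq_prod hμa hμ k hk _
  set L := blockConst (Fin n)
  set T := toEuclideanLin (fromBlocks A B Bᵀ A)
  have hupper (pq) :
      ⟪L pq, T (L pq)⟫ = (2 * e + a) / n * ⟪L pq, L pq⟫ - a * (pq.1 - pq.2) ^ 2 := by
    simpa [he, ha] using real_inner_blockConst_toEuclideanLin_fromBlocks_eq_sub A B pq
  have hlower (pq) :
      ⟪L pq, T (L pq)⟫ = (2 * e - a) / n * ⟪L pq, L pq⟫ + a * (pq.1 + pq.2) ^ 2 := by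
    simpa [he, ha] using real_inner_blockConst_toEuclideanLin_fromBlocks_eq_add A B pq
  have hL (pq) (h : pq ≠ 0) : L pq ≠ 0 := by simpa using (blockConst_injective (Fin n)).ne h
  have hrange : finrank ℝ (LinearMap.range L) = 2 := by
    rw [LinearMap.finrank_range_of_inj (blockConst_injective _)]
    simp
  refine ⟨⟨?_, ?_⟩, ?_, ?_⟩ <;> rw [hμ_eq]
  · refine hT.eigenvalues_le_of_forall_inner_le _ (W := LinearMap.range L) ?_ _
      (by simp [hrange]; omega)
    rintro _ ⟨pq, rfl⟩
    nlinarith [hupper pq, mul_nonneg a.cast_nonneg (sq_nonneg (pq.1 - pq.2))]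
  · exact hT.le_eigenvalues_of_le_inner _ (hL (1, 1) (by simp)) (by simp [hupper]) _ rfl
  · exact hT.eigenvalues_le_of_inner_le _ (hL (1, -1) (by simp)) (by simp [hlower]) _
      (by simp; omega)
  · refine hT.le_eigenvalues_of_forall_le_inner _ (W := LinearMap.range L) ?_ _
      (by simp [hrange])
    rintro _ ⟨pq, rfl⟩
    nlinarith [hlower pq, mul_nonneg a.cast_nonneg (sq_nonneg (pq.1 + pq.2))]
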